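/- Under the stated clustered-model assumptions, let y = Xα + ε where ε = (ε_1',…,ε_m')' is a random N-vector with E[ε_i] = 0, E[ε_iε_i'] = Σ_i, and E[ε_iε_h'] = 0 for i ≠ h. Let ÿ = (I−H_{S̈})(I−H_T)y and β̂ = M_R̈ Σ_i R̈_i'W_iÿ_i. Then β̂ is unbiased for the coefficient block β of α corresponding to R, and Var(β̂) = M_R̈ (Σ_{i=1}^m R̈_i' W_i Σ_i W_i R̈_i) M_R̈. -/

import Mathlib

open Matrix MeasureTheory

abbrev Obs {m : ℕ} (n : Fin m → ℕ) : Type := (i : Fin m) × Fin (n i)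

/-- The rows of a stacked matrix belonging to cluster `i`. -/
def cRows {m : ℕ} {n : Fin m → ℕ} {c : Type*} (i : Fin m)
    (M : Matrix (Obs n) c ℝ) : Matrix (Fin (n i)) c ℝ :=
  Matrix.of fun j k => M ⟨i, j⟩ k

/-- The entries of a stacked vector belonging to cluster `i`. -/
def cVec {m : ℕ} {n : Fin m → ℕ} (i : Fin m) (v : Obs n → ℝ) : Fin (n i) → ℝ :=
  fun j => v ⟨i, j⟩

/-- `M_Z = (Zᵀ W Z)⁻¹`. -/
noncomputable def Mmat {Ω q : Type*} [Fintype Ω] [Fintype q] [DecidableEq q]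
    (W : Matrix Ω Ω ℝ) (Z : Matrix Ω q ℝ) : Matrix q q ℝ :=
  (Zᵀ * W * Z)⁻¹

/-- `H_Z = Z M_Z Zᵀ W`. -/
noncomputable def Hmat {Ω q : Type*} [Fintype Ω] [Fintype q] [DecidableEq q]
    (W : Matrix Ω Ω ℝ) (Z : Matrix Ω q ℝ) : Matrix Ω Ω ℝ :=
  Z * Mmat W Z * Zᵀ * W

/-! Write `P = (1 - H_S̈)(1 - H_T)`. Because `(1 - H_Z) Z = 0` and `(1 - H_Z)ᵀ W = W (1 - H_Z)`,
`P` sends `X = [R S T]` to `[R̈ 0 0]`, and `R̈` is `W`-orthogonal to `T` and to `S̈`, so that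
`R̈ᵀ W P = R̈ᵀ W`. Hence `β̂ = M_R̈ R̈ᵀ W P (X α + ε) = β + B ε` with `B = M_R̈ R̈ᵀ W`: its mean is
`β` and its covariance is `B Σ Bᵀ` with `Σ = blockdiag(Σᵢ)`, which is the cluster sum written
as a product of block-diagonal matrices. The Gram matrices of `T`, `S̈` and `R̈` are invertible
because each of these is a block of columns of `X` minus combinations of the other columns of
`X`, so it inherits full column rank from `X`. -/

section BlockDiagonal

lemma blockDiagonal'_mulVec_apply {ι α : Type*} [Fintype ι] [DecidableEq ι] {p : ι → Type*}
    [∀ i, Fintype (p i)] [NonUnitalNonAssocSemiring α] (C : ∀ i, Matrix (p i) (p i) α)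
    (v : (Σ i, p i) → α) (i : ι) (j : p i) :
    (blockDiagonal' C *ᵥ v) ⟨i, j⟩ = (C i *ᵥ fun k => v ⟨i, k⟩) j := by
  simp only [mulVec, dotProduct, Fintype.sum_sigma]
  rw [Fintype.sum_eq_single i fun i' hi' => by simp [blockDiagonal'_apply_ne _ _ _ hi'.symm]]
  simp [blockDiagonal'_apply_eq]

lemma posDef_blockDiagonal' {ι R : Type*} [Fintype ι] [DecidableEq ι] {p : ι → Type*}
    [∀ i, Fintype (p i)] [Ring R] [PartialOrder R] [StarRing R] [IsOrderedAddMonoid R]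
    {C : ∀ i, Matrix (p i) (p i) R}
    (hC : ∀ i, (C i).PosDef) : (blockDiagonal' C).PosDef := by
  refine PosDef.of_dotProduct_mulVec_pos (isHermitian_blockDiagonal'_iff.2 fun i => (hC i).1)
    fun x hx => ?_
  obtain ⟨⟨i, j⟩, hij⟩ : ∃ o, x o ≠ 0 := Function.ne_iff.1 hx
  have hblocks : star x ⬝ᵥ (blockDiagonal' C *ᵥ x)
      = ∑ i, star (fun j => x ⟨i, j⟩) ⬝ᵥ (C i *ᵥ fun j => x ⟨i, j⟩) := by
    simp only [dotProduct, Fintype.sum_sigma, blockDiagonal'_mulVec_apply]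
    rfl
  rw [hblocks]
  exact Finset.sum_pos' (fun k _ => (hC k).posSemidef.dotProduct_mulVec_nonneg _)
    ⟨i, Finset.mem_univ _, (hC i).dotProduct_mulVec_pos (Function.ne_iff.2 ⟨j, hij⟩)⟩

end BlockDiagonal

section Clusters

variable {m : ℕ} {n : Fin m → ℕ}

lemma sum_transpose_cRows_mul_mul_cRows {c c' : Type*} [Fintype c] [Fintype c']
    (P : Matrix (Obs n) c ℝ) (C : ∀ i, Matrix (Fin (n i)) (Fin (n i)) ℝ)
    (Q : Matrix (Obs n) c' ℝ) :
    ∑ i, (cRows i P)ᵀ * C i * cRows i Q = Pᵀ * blockDiagonal' C * Q := by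
  ext a b
  simp only [Matrix.sum_apply, mul_apply, transpose_apply, cRows, of_apply, Fintype.sum_sigma,
    blockDiagonal'_apply, Finset.sum_mul]
  refine Finset.sum_congr rfl fun i _ => Finset.sum_congr rfl fun j _ => ?_
  rw [Fintype.sum_eq_single i fun i' hi' => by simp [hi']]
  simp

lemma sum_transpose_cRows_mul_mul_mul_mul_cRows {c c' : Type*} [Fintype c] [Fintype c']
    (P : Matrix (Obs n) c ℝ) (A B C : ∀ i, Matrix (Fin (n i)) (Fin (n i)) ℝ)
    (Q : Matrix (Obs n) c' ℝ) :
    ∑ i, (cRows i P)ᵀ * A i * B i * C i * cRows i Q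
      = Pᵀ * blockDiagonal' A * blockDiagonal' B * blockDiagonal' C * Q := by
  rw [show Pᵀ * blockDiagonal' A * blockDiagonal' B * blockDiagonal' C * Q
      = Pᵀ * blockDiagonal' (fun i => A i * B i * C i) * Q by
    simp only [blockDiagonal'_mul, Matrix.mul_assoc], ← sum_transpose_cRows_mul_mul_cRows]
  simp only [Matrix.mul_assoc]

lemma sum_transpose_cRows_mul_mulVec_cVec {c : Type*} [Fintype c]
    (P : Matrix (Obs n) c ℝ) (C : ∀ i, Matrix (Fin (n i)) (Fin (n i)) ℝ) (v : Obs n → ℝ) :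
    ∑ i, ((cRows i P)ᵀ * C i) *ᵥ cVec i v = (Pᵀ * blockDiagonal' C) *ᵥ v := by
  have h := sum_transpose_cRows_mul_mul_cRows P C (replicateCol Unit v)
  ext a
  simpa [cRows, cVec, replicateCol, mulVec, dotProduct, mul_apply, Matrix.sum_apply]
    using congrFun (congrFun h a) ()

end Clusters

section Projection

variable {Ω q : Type*} [Fintype Ω] [Fintype q] [DecidableEq q] {W : Matrix Ω Ω ℝ}
  {Z : Matrix Ω q ℝ}

lemma isSymm_Mmat (hW : W.IsSymm) (Z : Matrix Ω q ℝ) : (Mmat W Z).IsSymm := by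
  rw [IsSymm, Mmat, transpose_nonsing_inv, transpose_mul, transpose_mul, transpose_transpose,
    hW.eq, Matrix.mul_assoc]

lemma Hmat_mul_self (hZ : IsUnit (Zᵀ * W * Z).det) : Hmat W Z * Z = Z := by
  have : Hmat W Z * Z = Z * (Mmat W Z * (Zᵀ * W * Z)) := by simp only [Hmat, Matrix.mul_assoc]
  rw [this, Mmat, nonsing_inv_mul _ hZ, Matrix.mul_one]

lemma Hmat_mul_eq_zero {p : Type*} {A : Matrix Ω p ℝ} (h : Zᵀ * W * A = 0) :
    Hmat W Z * A = 0 := by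
  have : Hmat W Z * A = Z * Mmat W Z * (Zᵀ * W * A) := by simp only [Hmat, Matrix.mul_assoc]
  rw [this, h, Matrix.mul_zero]

lemma mul_Hmat_eq_zero {p : Type*} {B : Matrix p Ω ℝ} (h : B * Z = 0) : B * Hmat W Z = 0 := by
  simp only [Hmat, ← Matrix.mul_assoc, h, Matrix.zero_mul]

variable [DecidableEq Ω]

lemma one_sub_Hmat_mul_self (hZ : IsUnit (Zᵀ * W * Z).det) : (1 - Hmat W Z) * Z = 0 := by
  rw [Matrix.sub_mul, Matrix.one_mul, Hmat_mul_self hZ, sub_self]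

lemma one_sub_Hmat_mul (W : Matrix Ω Ω ℝ) (Z : Matrix Ω q ℝ) {p : Type*} (A : Matrix Ω p ℝ) :
    (1 - Hmat W Z) * A = A - Z * (Mmat W Z * Zᵀ * W * A) := by
  simp only [Hmat, Matrix.sub_mul, Matrix.one_mul, Matrix.mul_assoc]

lemma transpose_one_sub_Hmat_mul (hW : W.IsSymm) (Z : Matrix Ω q ℝ) :
    (1 - Hmat W Z)ᵀ * W = W * (1 - Hmat W Z) := by
  simp only [Hmat, transpose_sub, transpose_one, transpose_mul, transpose_transpose, hW.eq,
    (isSymm_Mmat hW Z).eq, Matrix.sub_mul, Matrix.mul_sub, Matrix.one_mul, Matrix.mul_one,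
    Matrix.mul_assoc]

lemma transpose_one_sub_Hmat_mul_mul_self (hW : W.IsSymm) (hZ : IsUnit (Zᵀ * W * Z).det)
    {p : Type*} (A : Matrix Ω p ℝ) : ((1 - Hmat W Z) * A)ᵀ * W * Z = 0 := by
  rw [transpose_mul, Matrix.mul_assoc Aᵀ, transpose_one_sub_Hmat_mul hW, Matrix.mul_assoc,
    Matrix.mul_assoc, one_sub_Hmat_mul_self hZ, Matrix.mul_zero, Matrix.mul_zero]

end Projection

section FullRank

variable {Ω a b : Type*} [Fintype a] [Fintype b]

lemma mulVec_injective_of_isUnit_det_gram [Fintype Ω] [DecidableEq a] {W : Matrix Ω Ω ℝ}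
    {Z : Matrix Ω a ℝ} (hZ : IsUnit (Zᵀ * W * Z).det) : Function.Injective Z.mulVec :=
  Function.LeftInverse.injective (g := (Mmat W Z * Zᵀ * W).mulVec) fun v => by
    rw [mulVec_mulVec, show Mmat W Z * Zᵀ * W * Z = Mmat W Z * (Zᵀ * W * Z) by
      simp only [Matrix.mul_assoc], Mmat, nonsing_inv_mul _ hZ, one_mulVec]

lemma isUnit_det_gram_of_mulVec_injective [Fintype Ω] [DecidableEq a] {W : Matrix Ω Ω ℝ}
    (hW : W.PosDef) {Z : Matrix Ω a ℝ} (hZ : Function.Injective Z.mulVec) :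
    IsUnit (Zᵀ * W * Z).det := by
  have := hW.conjTranspose_mul_mul_same hZ
  rw [conjTranspose_eq_transpose_of_trivial] at this
  exact isUnit_iff_ne_zero.2 this.det_pos.ne'

lemma mulVec_injective_right_of_fromCols {A : Matrix Ω a ℝ} {B : Matrix Ω b ℝ}
    (h : Function.Injective (fromCols A B).mulVec) : Function.Injective B.mulVec :=
  fun u v huv => by
    have := @h (Sum.elim 0 u) (Sum.elim 0 v) (by simp only [fromCols_mulVec_sumElim, huv])
    simpa using congrArg (· ∘ Sum.inr) this

lemma mulVec_injective_sub_mul_of_fromCols {A : Matrix Ω a ℝ} {B : Matrix Ω b ℝ}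
    (h : Function.Injective (fromCols A B).mulVec) (K : Matrix b a ℝ) :
    Function.Injective (A - B * K).mulVec := fun u v huv => by
  have hsplit : ∀ w, (A - B * K) *ᵥ w = fromCols A B *ᵥ Sum.elim w (-(K *ᵥ w)) := fun w => by
    rw [fromCols_mulVec_sumElim, sub_mulVec, mulVec_neg, mulVec_mulVec, sub_eq_add_neg]
  have := @h (Sum.elim u _) (Sum.elim v _) (by rw [← hsplit, ← hsplit, huv])
  simpa using congrArg (· ∘ Sum.inl) this

end FullRank

section Absorption

variable {Ω r s t : Type*} [Fintype Ω] [DecidableEq Ω] [Fintype s] [DecidableEq s] [Fintype t]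
  [DecidableEq t] {W : Matrix Ω Ω ℝ}
  {R Rd : Matrix Ω r ℝ} {S Sd : Matrix Ω s ℝ} {T : Matrix Ω t ℝ}

lemma isUnit_det_gram_absorbed [Fintype r] [DecidableEq r] (hW : W.PosDef)
    (hX : Function.Injective (fromCols R (fromCols S T)).mulVec)
    (hSd : Sd = (1 - Hmat W T) * S) (hRd : Rd = (1 - Hmat W Sd) * ((1 - Hmat W T) * R)) :
    IsUnit (Tᵀ * W * T).det ∧ IsUnit (Sdᵀ * W * Sd).det ∧ IsUnit (Rdᵀ * W * Rd).det := by
  have hST := mulVec_injective_right_of_fromCols hX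
  obtain ⟨K, hK⟩ : ∃ K, (1 - Hmat W T) * R = R - T * K := ⟨_, one_sub_Hmat_mul W T R⟩
  obtain ⟨L, hL⟩ : ∃ L, Sd = S - T * L := ⟨_, hSd.trans (one_sub_Hmat_mul W T S)⟩
  obtain ⟨N, hN⟩ : ∃ N, Rd = (1 - Hmat W T) * R - Sd * N :=
    ⟨_, hRd.trans (one_sub_Hmat_mul W Sd _)⟩
  have hRd_cols : Rd = R - fromCols S T * fromRows N (K - L * N) := by
    rw [hN, hK, hL, fromCols_mul_fromRows]
    simp only [Matrix.sub_mul, Matrix.mul_sub, Matrix.mul_assoc]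
    abel
  refine ⟨isUnit_det_gram_of_mulVec_injective hW (mulVec_injective_right_of_fromCols hST),
    isUnit_det_gram_of_mulVec_injective hW ?_, isUnit_det_gram_of_mulVec_injective hW ?_⟩
  · exact hL ▸ mulVec_injective_sub_mul_of_fromCols hST L
  · exact hRd_cols ▸ mulVec_injective_sub_mul_of_fromCols hX _

lemma absorb_mul_fromCols (hT : IsUnit (Tᵀ * W * T).det) (hSdu : IsUnit (Sdᵀ * W * Sd).det)
    (hSd : Sd = (1 - Hmat W T) * S) (hRd : Rd = (1 - Hmat W Sd) * ((1 - Hmat W T) * R)) :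
    (1 - Hmat W Sd) * (1 - Hmat W T) * fromCols R (fromCols S T) = fromCols Rd 0 := by
  simp only [mul_fromCols, Matrix.mul_assoc, ← hSd, ← hRd, one_sub_Hmat_mul_self hT,
    one_sub_Hmat_mul_self hSdu, Matrix.mul_zero, fromCols_zero]

lemma Mmat_mul_absorb_mul_fromCols [Fintype r] [DecidableEq r] (hT : IsUnit (Tᵀ * W * T).det)
    (hSdu : IsUnit (Sdᵀ * W * Sd).det) (hRdu : IsUnit (Rdᵀ * W * Rd).det)
    (hSd : Sd = (1 - Hmat W T) * S) (hRd : Rd = (1 - Hmat W Sd) * ((1 - Hmat W T) * R)) :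
    Mmat W Rd * (Rdᵀ * W) * ((1 - Hmat W Sd) * (1 - Hmat W T)) * fromCols R (fromCols S T)
      = fromCols 1 0 := by
  rw [Matrix.mul_assoc, absorb_mul_fromCols hT hSdu hSd hRd, mul_fromCols, Matrix.mul_zero,
    Matrix.mul_assoc, Mmat, nonsing_inv_mul _ hRdu]

lemma absorbed_transpose_mul_mul_absorb (hW : W.IsSymm) (hT : IsUnit (Tᵀ * W * T).det)
    (hSdu : IsUnit (Sdᵀ * W * Sd).det)
    (hSd : Sd = (1 - Hmat W T) * S) (hRd : Rd = (1 - Hmat W Sd) * ((1 - Hmat W T) * R)) :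
    Rdᵀ * W * ((1 - Hmat W Sd) * (1 - Hmat W T)) = Rdᵀ * W := by
  have hSdT : Sdᵀ * W * T = 0 := hSd ▸ transpose_one_sub_Hmat_mul_mul_self hW hT S
  have hRdSd : Rdᵀ * W * Sd = 0 := hRd ▸ transpose_one_sub_Hmat_mul_mul_self hW hSdu _
  have hT_fixed : (1 - Hmat W Sd) * T = T := by
    rw [Matrix.sub_mul, Matrix.one_mul, Hmat_mul_eq_zero hSdT, sub_zero]
  have hRdT : Rdᵀ * W * T = 0 := by
    rw [hRd, transpose_mul, Matrix.mul_assoc _ _ W, transpose_one_sub_Hmat_mul hW,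
      Matrix.mul_assoc, Matrix.mul_assoc, hT_fixed, ← Matrix.mul_assoc,
      transpose_one_sub_Hmat_mul_mul_self hW hT R]
  simp only [Matrix.mul_sub, Matrix.mul_one, ← Matrix.mul_assoc, mul_Hmat_eq_zero hRdSd,
    mul_Hmat_eq_zero hRdT, sub_zero]

end Absorption

section Moments

variable {Ω ι κ : Type*} [MeasurableSpace Ω] {μ : Measure Ω} [Fintype ι] {ε : Ω → ι → ℝ}

lemma integral_add_mulVec_apply [IsProbabilityMeasure μ]
    (hint : ∀ i, Integrable (fun ω => ε ω i) μ) (hmean : ∀ i, ∫ ω, ε ω i ∂μ = 0)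
    (c : κ → ℝ) (B : Matrix κ ι ℝ) (a : κ) : ∫ ω, (c + B *ᵥ ε ω) a ∂μ = c a := by
  simp only [Pi.add_apply, mulVec, dotProduct]
  rw [integral_add (integrable_const _) (integrable_finsetSum _ fun i _ => (hint i).const_mul _),
    integral_finsetSum _ fun i _ => (hint i).const_mul _]
  simp [integral_const_mul, hmean]

lemma integral_mulVec_apply_mul_mulVec_apply {C : Matrix ι ι ℝ}
    (hint : ∀ i j, Integrable (fun ω => ε ω i * ε ω j) μ)
    (hcov : ∀ i j, ∫ ω, ε ω i * ε ω j ∂μ = C i j) (B : Matrix κ ι ℝ) (a b : κ) :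
    ∫ ω, (B *ᵥ ε ω) a * (B *ᵥ ε ω) b ∂μ = (B * C * Bᵀ) a b := by
  have hexpand : ∀ ω, (B *ᵥ ε ω) a * (B *ᵥ ε ω) b
      = ∑ i, ∑ j, B a i * B b j * (ε ω i * ε ω j) := fun ω => by
    simp only [mulVec, dotProduct, Finset.sum_mul_sum]
    exact Finset.sum_congr rfl fun i _ => Finset.sum_congr rfl fun j _ => by ring
  simp only [hexpand]
  rw [integral_finsetSum _ fun i _ => integrable_finsetSum _ fun j _ => (hint i j).const_mul _]
  simp only [integral_finsetSum _ fun j _ => (hint _ j).const_mul _, integral_const_mul, hcov,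
    mul_apply, transpose_apply, Finset.sum_mul]
  rw [Finset.sum_comm]
  exact Finset.sum_congr rfl fun i _ => Finset.sum_congr rfl fun j _ => by ring

end Moments

/-- the absorbed WLS estimator `β̂` is unbiased for the coefficient
block `β` of `α` corresponding to `R`, and
`Var(β̂) = M_R̈ (Σᵢ R̈ᵢᵀ Wᵢ Σᵢ Wᵢ R̈ᵢ) M_R̈`. -/
theorem absorbed_wls_unbiased_and_variance
    {m r s t : ℕ} {n : Fin m → ℕ}
    (Wb : ∀ i : Fin m, Matrix (Fin (n i)) (Fin (n i)) ℝ)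
    (hWpd : ∀ i, (Wb i).PosDef)
    (W : Matrix (Obs n) (Obs n) ℝ) (hW : W = Matrix.blockDiagonal' Wb)
    (R : Matrix (Obs n) (Fin r) ℝ) (S : Matrix (Obs n) (Fin s) ℝ)
    (T : Matrix (Obs n) (Fin t) ℝ)
    (X : Matrix (Obs n) (Fin r ⊕ (Fin s ⊕ Fin t)) ℝ)
    (hX : X = Matrix.fromCols R (Matrix.fromCols S T))
    (hfullrank : IsUnit (Xᵀ * W * X).det)
    -- absorbed matrices
    (Sd : Matrix (Obs n) (Fin s) ℝ) (hSd : Sd = (1 - Hmat W T) * S)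
    (Rd : Matrix (Obs n) (Fin r) ℝ)
    (hRd : Rd = (1 - Hmat W Sd) * ((1 - Hmat W T) * R))
    -- the stochastic model: y = Xα + ε with E ε = 0, E[ε_i ε_iᵀ] = Σ_i, and
    -- E[ε_i ε_hᵀ] = 0 for i ≠ h (i.e. E[εεᵀ] = blockdiag(Σ_1,…,Σ_m))
    {ΩP : Type*} [MeasurableSpace ΩP] (μ : Measure ΩP) [IsProbabilityMeasure μ]
    (α : (Fin r ⊕ (Fin s ⊕ Fin t)) → ℝ)
    (Sig : ∀ i : Fin m, Matrix (Fin (n i)) (Fin (n i)) ℝ)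
    (ε : ΩP → Obs n → ℝ)
    (hεint : ∀ a, Integrable (fun ω => ε ω a) μ)
    (hεmean : ∀ a, ∫ ω, ε ω a ∂μ = 0)
    (hεcovint : ∀ a b, Integrable (fun ω => ε ω a * ε ω b) μ)
    (hεcov : ∀ a b, ∫ ω, ε ω a * ε ω b ∂μ = Matrix.blockDiagonal' Sig a b)
    (y : ΩP → Obs n → ℝ) (hy : ∀ ω, y ω = X *ᵥ α + ε ω)
    -- ÿ = (I−H_S̈)(I−H_T) y and β̂ = M_R̈ Σᵢ R̈ᵢᵀ Wᵢ ÿᵢ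
    (yd : ΩP → Obs n → ℝ)
    (hyd : ∀ ω, yd ω = ((1 - Hmat W Sd) * (1 - Hmat W T)) *ᵥ y ω)
    (bhat : ΩP → Fin r → ℝ)
    (hbhat : ∀ ω, bhat ω =
      Mmat W Rd *ᵥ ∑ i : Fin m, ((cRows i Rd)ᵀ * Wb i) *ᵥ cVec i (yd ω)) :
    -- β̂ is unbiased for β = αᵣ, the coefficients of R
    (∀ a : Fin r, (∫ ω, bhat ω a ∂μ) = α (Sum.inl a)) ∧
    -- and Var(β̂) = M_R̈ (Σᵢ R̈ᵢᵀ Wᵢ Σᵢ Wᵢ R̈ᵢ) M_R̈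
    (∀ a b : Fin r,
      (∫ ω, (bhat ω a - ∫ ω', bhat ω' a ∂μ) * (bhat ω b - ∫ ω', bhat ω' b ∂μ) ∂μ)
        = (Mmat W Rd *
            (∑ i : Fin m, (cRows i Rd)ᵀ * Wb i * Sig i * Wb i * cRows i Rd) *
            Mmat W Rd) a b) := by
  have hWpos : W.PosDef := hW ▸ posDef_blockDiagonal' hWpd
  have hWsymm : W.IsSymm := isHermitian_iff_isSymm.1 hWpos.isHermitian
  obtain ⟨hT, hSdu, hRdu⟩ := isUnit_det_gram_absorbed hWpos
    (hX ▸ mulVec_injective_of_isUnit_det_gram hfullrank) hSd hRd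
  set B := Mmat W Rd * (Rdᵀ * W) with hB
  have hrep : ∀ ω, bhat ω = α ∘ Sum.inl + B *ᵥ ε ω := fun ω => by
    calc bhat ω = (B * ((1 - Hmat W Sd) * (1 - Hmat W T))) *ᵥ (X *ᵥ α + ε ω) := by
          rw [hbhat, sum_transpose_cRows_mul_mulVec_cVec, ← hW, hyd, hy, mulVec_mulVec,
            mulVec_mulVec, Matrix.mul_assoc]
      _ = fromCols 1 0 *ᵥ α + B *ᵥ ε ω := by
          rw [mulVec_add, mulVec_mulVec, hX, Mmat_mul_absorb_mul_fromCols hT hSdu hRdu hSd hRd,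
            Matrix.mul_assoc, absorbed_transpose_mul_mul_absorb hWsymm hT hSdu hSd hRd]
      _ = α ∘ Sum.inl + B *ᵥ ε ω := by
          rw [fromCols_mulVec, one_mulVec, zero_mulVec, add_zero]
  have hmean : ∀ a, ∫ ω, bhat ω a ∂μ = α (Sum.inl a) := fun a => by
    simp only [hrep]
    exact integral_add_mulVec_apply hεint hεmean _ B a
  refine ⟨hmean, fun a b => ?_⟩
  simp only [hmean]
  simp only [hrep, Pi.add_apply, Function.comp_apply, add_sub_cancel_left]
  rw [integral_mulVec_apply_mul_mulVec_apply hεcovint hεcov, hB,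
    sum_transpose_cRows_mul_mul_mul_mul_cRows, ← hW, transpose_mul, transpose_mul,
    (isSymm_Mmat hWsymm Rd).eq, hWsymm.eq, transpose_transpose]
  simp only [Matrix.mul_assoc]
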